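/- Let a, b > 0 and D ≥ 0 be real numbers, and define Q1 = 1/3 − (1/(2π))·arccos((D+a)/(D+a+b)) − (1/(2π))·arccos((D+b)/(D+a+b)); Q2 = 1/3 − (1/(2π))·arccos( a/(√(2a)·√(D+a+b)) ) − (1/(2π))·arccos( b/(√(2b)·√(D+a+b)) ); Q3 = 1/3 − (1/(4π))·[ arccos(1/2) + arccos((D+b)/(D+a+b)) + 2·arccos( a/(√(2a)·√(D+a+b)) ) ]; Q4 = 1/3 − (1/(4π))·[ arccos(1/2) + arccos((D+a)/(D+a+b)) + 2·arccos( b/(√(2b)·√(D+a+b)) ) ]; Q5 = 0. Then Q1 ≥ max{Q2, Q3, Q4, Q5}, and Q1 = Q2 = Q3 = Q4 = Q5 holds if and only if D = 0 and a = b. -/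

import Mathlib

/-!
Write `S = D + a + b`, `α = arccos ((D + a) / S)` and `β = arccos ((D + b) / S)`.
The half-angle formula `cos (π - 2θ) = 1 - 2 cos² θ` turns `2 arccos (a / (√(2a) √S))`
into `π - β` and `2 arccos (b / (√(2b) √S))` into `π - α`, so that `Q₃ = Q₄ = 0` and
`Q₂ = -Q₁ / 2`, while `Q₁ = (2π/3 - (α + β)) / (2π)`. Everything therefore reduces to
`α + β ≤ 2π/3`, with equality iff `D = 0` and `a = b`. Since `cos α + cos β = 1 + D / S ≥ 1`,
this is the inequality `arccos x + arccos y ≤ 2π/3` for `x + y ≥ 1`, which follows from the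
sum-to-product formula `cos α + cos β = 2 cos ((α + β)/2) cos ((α - β)/2)`.
-/

open Real

noncomputable section

/-- `Q₁ = 1/3 - (1/(2π)) arccos((D+a)/(D+a+b)) - (1/(2π)) arccos((D+b)/(D+a+b))`. -/
def Q1 (a b D : ℝ) : ℝ :=
  1 / 3 - (1 / (2 * π)) * Real.arccos ((D + a) / (D + a + b))
    - (1 / (2 * π)) * Real.arccos ((D + b) / (D + a + b))

/-- `Q₂ = 1/3 - (1/(2π)) arccos(a/(√(2a)√(D+a+b))) - (1/(2π)) arccos(b/(√(2b)√(D+a+b)))`. -/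
def Q2 (a b D : ℝ) : ℝ :=
  1 / 3 - (1 / (2 * π)) * Real.arccos (a / (Real.sqrt (2 * a) * Real.sqrt (D + a + b)))
    - (1 / (2 * π)) * Real.arccos (b / (Real.sqrt (2 * b) * Real.sqrt (D + a + b)))

/-- `Q₃`. -/
def Q3 (a b D : ℝ) : ℝ :=
  1 / 3 - (1 / (4 * π)) * (Real.arccos (1 / 2) + Real.arccos ((D + b) / (D + a + b))
    + 2 * Real.arccos (a / (Real.sqrt (2 * a) * Real.sqrt (D + a + b))))

/-- `Q₄`. -/
def Q4 (a b D : ℝ) : ℝ :=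
  1 / 3 - (1 / (4 * π)) * (Real.arccos (1 / 2) + Real.arccos ((D + a) / (D + a + b))
    + 2 * Real.arccos (b / (Real.sqrt (2 * b) * Real.sqrt (D + a + b))))

/-- `Q₅ = 0`. -/
def Q5 (a b D : ℝ) : ℝ := 0

namespace Real

lemma arccos_one_half : arccos (1 / 2) = π / 3 :=
  arccos_eq_of_eq_cos (by positivity) (by linarith [pi_pos]) cos_pi_div_three.symm

lemma arccos_one_sub_two_mul_sq {x : ℝ} (hx₀ : 0 ≤ x) (hx₁ : x ≤ 1) :
    arccos (1 - 2 * x ^ 2) = π - 2 * arccos x := by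
  have hle : arccos x ≤ π / 2 := arccos_le_pi_div_two.2 hx₀
  refine arccos_eq_of_eq_cos (by linarith) (by linarith [arccos_nonneg x]) ?_
  rw [cos_pi_sub, cos_two_mul, cos_arccos (by linarith) hx₁]
  ring

section SumOfArccos

variable {x y : ℝ}

lemma add_eq_two_mul_cos_mul_cos_of_one_le_add (hx : x ≤ 1) (hy : y ≤ 1) (hxy : 1 ≤ x + y) :
    x + y = 2 * cos ((arccos x + arccos y) / 2) * cos ((arccos x - arccos y) / 2) := by
  rw [← cos_add_cos, cos_arccos (by linarith) hx, cos_arccos (by linarith) hy]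

lemma arccos_add_arccos_le_two_pi_div_three (hx : x ≤ 1) (hy : y ≤ 1) (hxy : 1 ≤ x + y) :
    arccos x + arccos y ≤ 2 * π / 3 := by
  have hsum := add_eq_two_mul_cos_mul_cos_of_one_le_add hx hy hxy
  have hα := arccos_le_pi_div_two.2 (show 0 ≤ x by linarith)
  have hβ := arccos_le_pi_div_two.2 (show 0 ≤ y by linarith)
  have hα₀ := arccos_nonneg x
  have hβ₀ := arccos_nonneg y
  have hcos : 1 / 2 ≤ cos ((arccos x + arccos y) / 2) := by
    have : 0 ≤ cos ((arccos x + arccos y) / 2) :=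
      cos_nonneg_of_mem_Icc ⟨by linarith [pi_pos], by linarith⟩
    nlinarith [cos_le_one ((arccos x - arccos y) / 2)]
  have h := arccos_le_arccos hcos
  rw [arccos_cos (by linarith) (by linarith [pi_pos]), arccos_one_half] at h
  linarith

lemma arccos_add_arccos_eq_two_pi_div_three_iff (hx : x ≤ 1) (hy : y ≤ 1) (hxy : 1 ≤ x + y) :
    arccos x + arccos y = 2 * π / 3 ↔ x = 1 / 2 ∧ y = 1 / 2 := by
  refine ⟨fun h ↦ ?_, by rintro ⟨rfl, rfl⟩; rw [arccos_one_half]; ring⟩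
  have hsum := add_eq_two_mul_cos_mul_cos_of_one_le_add hx hy hxy
  rw [h, show 2 * π / 3 / 2 = π / 3 by ring, cos_pi_div_three] at hsum
  have hcos_v : cos ((arccos x - arccos y) / 2) = 1 :=
    le_antisymm (cos_le_one _) (by linarith)
  have hv := (cos_eq_one_iff_of_lt_of_lt
    (by linarith [arccos_le_pi y, arccos_nonneg x, pi_pos])
    (by linarith [arccos_le_pi x, arccos_nonneg y, pi_pos])).1 hcos_v
  have hxy' : x = y := by
    rw [← cos_arccos (by linarith) hx, ← cos_arccos (by linarith) hy]
    congr 1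
    linarith
  constructor <;> linarith

end SumOfArccos

end Real

lemma arccos_div_sqrt_mul_sqrt {c S : ℝ} (hc : 0 < c) (hcS : c ≤ S) :
    arccos (c / (√(2 * c) * √S)) = (π - arccos ((S - c) / S)) / 2 := by
  have hS : 0 < S := hc.trans_le hcS
  set x := c / (√(2 * c) * √S)
  have hx_sq : x ^ 2 = c / (2 * S) := by
    rw [div_pow, mul_pow, sq_sqrt (by positivity), sq_sqrt hS.le]
    field_simp
  have hx₁ : x ≤ 1 := by
    refine (pow_le_one_iff_of_nonneg (by positivity) two_ne_zero).1 ?_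
    rw [hx_sq, div_le_one (by positivity)]
    linarith
  have h := arccos_one_sub_two_mul_sq (by positivity) hx₁
  rw [hx_sq, show 1 - 2 * (c / (2 * S)) = (S - c) / S by field_simp] at h
  linarith

section KernelLimits

variable {a b D : ℝ}

lemma arccos_args_bounds (ha : 0 < a) (hb : 0 < b) (hD : 0 ≤ D) :
    (D + a) / (D + a + b) ≤ 1 ∧ (D + b) / (D + a + b) ≤ 1 ∧
      1 ≤ (D + a) / (D + a + b) + (D + b) / (D + a + b) := by
  have hS : 0 < D + a + b := by linarith
  refine ⟨?_, ?_, ?_⟩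
  · rw [div_le_one hS]; linarith
  · rw [div_le_one hS]; linarith
  · rw [← add_div, le_div_iff₀ hS]; linarith

lemma Q1_eq :
    Q1 a b D = (2 * π / 3 - (arccos ((D + a) / (D + a + b)) + arccos ((D + b) / (D + a + b))))
      / (2 * π) := by
  rw [Q1]
  field_simp [pi_pos.ne']
  ring

lemma Q1_nonneg (ha : 0 < a) (hb : 0 < b) (hD : 0 ≤ D) : 0 ≤ Q1 a b D := by
  obtain ⟨hx, hy, hxy⟩ := arccos_args_bounds ha hb hD
  rw [Q1_eq]
  exact div_nonneg (sub_nonneg.2 (arccos_add_arccos_le_two_pi_div_three hx hy hxy))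
    (by positivity)

lemma Q1_eq_zero_iff (ha : 0 < a) (hb : 0 < b) (hD : 0 ≤ D) :
    Q1 a b D = 0 ↔ D = 0 ∧ a = b := by
  have hS : 0 < D + a + b := by linarith
  obtain ⟨hx, hy, hxy⟩ := arccos_args_bounds ha hb hD
  rw [Q1_eq, div_eq_zero_iff, or_iff_left (by positivity), sub_eq_zero, eq_comm,
    arccos_add_arccos_eq_two_pi_div_three_iff hx hy hxy, div_eq_iff hS.ne', div_eq_iff hS.ne']
  constructor
  · rintro ⟨h₁, h₂⟩; constructor <;> linarith
  · rintro ⟨rfl, rfl⟩; constructor <;> ring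

lemma Q2_eq_neg_half_Q1 (ha : 0 < a) (hb : 0 < b) (hD : 0 ≤ D) :
    Q2 a b D = -(Q1 a b D / 2) := by
  have hA := arccos_div_sqrt_mul_sqrt ha (show a ≤ D + a + b by linarith)
  have hB := arccos_div_sqrt_mul_sqrt hb (show b ≤ D + a + b by linarith)
  rw [show D + a + b - a = D + b by ring] at hA
  rw [show D + a + b - b = D + a by ring] at hB
  rw [Q1, Q2, hA, hB]
  field_simp [pi_pos.ne']
  ring

lemma Q3_eq_zero (ha : 0 < a) (hb : 0 < b) (hD : 0 ≤ D) : Q3 a b D = 0 := by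
  have hA := arccos_div_sqrt_mul_sqrt ha (show a ≤ D + a + b by linarith)
  rw [show D + a + b - a = D + b by ring] at hA
  rw [Q3, arccos_one_half, hA]
  field_simp [pi_pos.ne']
  ring

lemma Q4_eq_zero (ha : 0 < a) (hb : 0 < b) (hD : 0 ≤ D) : Q4 a b D = 0 := by
  have hB := arccos_div_sqrt_mul_sqrt hb (show b ≤ D + a + b by linarith)
  rw [show D + a + b - b = D + a by ring] at hB
  rw [Q4, arccos_one_half, hB]
  field_simp [pi_pos.ne']
  ring

end KernelLimits

/-- Lemma: ordering of the HDLSS kernel limits: for `a, b > 0` and `D ≥ 0`,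
`Q₁ ≥ max {Q₂, Q₃, Q₄, Q₅}`, with equality `Q₁ = Q₂ = Q₃ = Q₄ = Q₅` iff `D = 0` and `a = b`. -/
theorem stmt19 (a b D : ℝ) (ha : 0 < a) (hb : 0 < b) (hD : 0 ≤ D) :
    max (Q2 a b D) (max (Q3 a b D) (max (Q4 a b D) (Q5 a b D))) ≤ Q1 a b D ∧
      ((Q1 a b D = Q2 a b D ∧ Q2 a b D = Q3 a b D ∧ Q3 a b D = Q4 a b D ∧
          Q4 a b D = Q5 a b D) ↔ (D = 0 ∧ a = b)) := by
  have h₁ := Q1_nonneg ha hb hD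
  rw [Q2_eq_neg_half_Q1 ha hb hD, Q3_eq_zero ha hb hD, Q4_eq_zero ha hb hD, Q5,
    ← Q1_eq_zero_iff ha hb hD]
  refine ⟨by simp only [max_self, max_le_iff]; constructor <;> linarith, ?_⟩
  constructor
  · rintro ⟨h, -⟩; linarith
  · intro h; rw [h]; norm_num
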